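/- Let V be a finite-dimensional complex vector space and h a singular Hermitian form on V (i.e. a map h : V → [0,∞] such that V_fin := {x ∈ V : h(x) < ∞} is a linear subspace and the restriction of h to V_fin is a semi-positive definite Hermitian form). Then under the canonical identification V ≅ V^∨∨, the double dual singular Hermitian form satisfies h^∨∨ = h. -/

import Mathlib

open scoped ENNReal ComplexConjugate

/-- A singular Hermitian form on a complex vector space `V`: a map `h : V → [0,∞]`
whose finiteness locus `V_fin = {x | h x < ∞}` is a linear subspace and whose
restriction to `V_fin` is a semi-positive Hermitian form.  By the polarization
identity, this is captured by the parallelogram law on the finiteness locus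
together with `|c|²`-homogeneity. -/
structure IsSingularHermitianForm {V : Type*} [AddCommGroup V] [Module ℂ V]
    (h : V → ℝ≥0∞) : Prop where
  parallelogram : ∀ x y : V, h x ≠ ⊤ → h y ≠ ⊤ →
    h (x + y) + h (x - y) = 2 * h x + 2 * h y
  smul_eq : ∀ (c : ℂ) (x : V), h (c • x) = (‖c‖₊ : ℝ≥0∞) ^ 2 * h x

/-- The dual singular Hermitian form on `V^∨`.  For `ℓ ∈ V^∨` we set
`h^∨(ℓ) = ⨆ x, |ℓ x|² / h x` (conventions in `ℝ≥0∞`: `a / ∞ = 0`, and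
`a / 0 = ∞` for `a ≠ 0`).  This equals `∞` as soon as `ℓ` does not vanish on
the null space `N = h⁻¹(0)`, and on `{ℓ : ℓ|_N = 0}` it is the dual of the
non-degenerate Hermitian form induced by `h` on `V_fin / N`. -/
noncomputable def hermDual {V : Type*} [AddCommGroup V] [Module ℂ V]
    (h : V → ℝ≥0∞) : Module.Dual ℂ V → ℝ≥0∞ :=
  fun ℓ => ⨆ x : V, ((‖ℓ x‖₊ : ℝ≥0∞) ^ 2) / h x

namespace SHFAux

variable {V : Type*} [AddCommGroup V] [Module ℂ V] {h : V → ℝ≥0∞}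

theorem h_zero (hh : IsSingularHermitianForm h) : h 0 = 0 := by
  have := hh.smul_eq 0 0
  simpa using this

/-- The finiteness locus as a submodule. -/
def Wfin (hh : IsSingularHermitianForm h) : Submodule ℂ V where
  carrier := {v | h v ≠ ⊤}
  zero_mem' := by simp [h_zero hh]
  add_mem' := by
    intro a b ha hb
    have := hh.parallelogram a b ha hb
    intro htop
    rw [htop, top_add] at this
    exact (ENNReal.add_ne_top.mpr
      ⟨ENNReal.mul_ne_top (by simp) ha, ENNReal.mul_ne_top (by simp) hb⟩) this.symm
  smul_mem' := by
    intro c v hv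
    rw [Set.mem_setOf_eq, hh.smul_eq]
    exact ENNReal.mul_ne_top (by simp [ENNReal.pow_eq_top_iff]) hv

variable (hh : IsSingularHermitianForm h)

/-- quadratic form on the finiteness locus -/
def q (w : Wfin hh) : ℝ := (h (w : V)).toReal

theorem q_nonneg (w : Wfin hh) : 0 ≤ q hh w := ENNReal.toReal_nonneg

theorem q_par (x y : Wfin hh) :
    q hh (x + y) + q hh (x - y) = 2 * q hh x + 2 * q hh y := by
  have hxy : h ((x : V) + y) ≠ ⊤ := (x + y).2
  have hxy' : h ((x : V) - y) ≠ ⊤ := (x - y).2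
  have := congrArg ENNReal.toReal (hh.parallelogram (x : V) (y : V) x.2 y.2)
  rw [ENNReal.toReal_add hxy hxy', ENNReal.toReal_add (ENNReal.mul_ne_top (by simp) x.2) (ENNReal.mul_ne_top (by simp) y.2),
    ENNReal.toReal_mul, ENNReal.toReal_mul] at this
  simpa [q] using this

theorem q_smul (c : ℂ) (x : Wfin hh) : q hh (c • x) = ‖c‖ ^ 2 * q hh x := by
  have : ((c • x : Wfin hh) : V) = c • (x : V) := rfl
  simp only [q, this, hh.smul_eq, ENNReal.toReal_mul]
  simp [ENNReal.toReal_pow]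

theorem q_neg (x : Wfin hh) : q hh (-x) = q hh x := by
  have : (-x : Wfin hh) = (-1 : ℂ) • x := by simp
  rw [this, q_smul]; simp

/-- real part form -/
noncomputable def Rr (x y : Wfin hh) : ℝ := (q hh (x + y) - q hh (x - y)) / 4

theorem q_add (x y : Wfin hh) : q hh (x + y) = q hh x + q hh y + 2 * Rr hh x y := by
  have := q_par hh x y
  unfold Rr; linarith

theorem Rr_symm (x y : Wfin hh) : Rr hh x y = Rr hh y x := by
  unfold Rr
  rw [show x + y = y + x by abel, show x - y = -(y - x) by abel, q_neg]

theorem Rr_neg_right (x y : Wfin hh) : Rr hh x (-y) = - Rr hh x y := by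
  unfold Rr
  rw [show x + -y = x - y by abel, show x - -y = x + y by abel]
  ring

theorem Rr_zero_left (z : Wfin hh) : Rr hh 0 z = 0 := by
  unfold Rr
  rw [zero_add, zero_sub, q_neg]
  ring

theorem Rr_step (x y z : Wfin hh) :
    Rr hh (x + y) z + Rr hh (x - y) z = 2 * Rr hh x z := by
  have P1 := q_par hh (x + z) y
  have P2 := q_par hh (x - z) y
  rw [show x + z + y = x + y + z by abel, show x + z - y = x - y + z by abel] at P1
  rw [show x - z + y = x + y - z by abel, show x - z - y = x - y - z by abel] at P2
  unfold Rr
  linarith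

theorem Rr_double (x z : Wfin hh) : Rr hh (x + x) z = 2 * Rr hh x z := by
  have := Rr_step hh x x z
  rw [sub_self, Rr_zero_left] at this
  linarith

theorem Rr_add_left (u v z : Wfin hh) :
    Rr hh (u + v) z = Rr hh u z + Rr hh v z := by
  have key := Rr_step hh ((2⁻¹ : ℂ) • (u + v)) ((2⁻¹ : ℂ) • (u - v)) z
  have e1 : (2⁻¹ : ℂ) • (u + v) + (2⁻¹ : ℂ) • (u - v) = u := by
    rw [smul_add, smul_sub]; module
  have e2 : (2⁻¹ : ℂ) • (u + v) - (2⁻¹ : ℂ) • (u - v) = v := by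
    rw [smul_add, smul_sub]; module
  have e3 : (2⁻¹ : ℂ) • (u + v) + (2⁻¹ : ℂ) • (u + v) = u + v := by
    rw [smul_add]; module
  rw [e1, e2] at key
  have := Rr_double hh ((2⁻¹ : ℂ) • (u + v)) z
  rw [e3] at this
  linarith


set_option linter.deprecated false in

theorem additive_bounded_linear (f : ℝ →+ ℝ) (C : ℝ)
    (hb : ∀ s : ℝ, |s| ≤ 1 → |f s| ≤ C) (t : ℝ) : f t = t * f 1 := by
  have key : ∀ n : ℕ, 1 ≤ n → |f t - t * f 1| ≤ (C + |f 1|) / n := by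
    intro n hn
    have hnpos : (0:ℝ) < n := by exact_mod_cast hn
    set m : ℤ := ⌊(n:ℝ) * t⌋ with hm
    have h1 : (m:ℝ) ≤ n * t := Int.floor_le _
    have h2 : (n:ℝ) * t < m + 1 := Int.lt_floor_add_one _
    set δ : ℝ := t - m / n with hδ
    have hδ1 : (n:ℝ) * δ = n * t - m := by rw [hδ]; field_simp
    have hδ2 : 0 ≤ (n:ℝ) * δ := by rw [hδ1]; linarith
    have hδ3 : (n:ℝ) * δ ≤ 1 := by rw [hδ1]; linarith
    have hfn : f ((n:ℝ) * δ) = n * f δ := by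
      rw [← nsmul_eq_mul, map_nsmul, nsmul_eq_mul]
    have hfδ' : (n:ℝ) * |f δ| ≤ C := by
      rw [← abs_of_pos hnpos, ← abs_mul, ← hfn]
      exact hb _ (by rw [abs_of_nonneg hδ2]; exact hδ3)
    have hfδ : |f δ| ≤ C / n := (le_div_iff₀ hnpos).mpr (by linarith [hfδ'])
    have hδabs : |δ| ≤ 1 / n := by
      rw [abs_of_nonneg (nonneg_of_mul_nonneg_right hδ2 hnpos)]
      rw [le_div_iff₀ hnpos]; linarith [hδ3]
    have hfm : f ((m:ℝ) / n) = (m : ℝ) * f (1 / n) := by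
      rw [div_eq_mul_one_div, ← zsmul_eq_mul, map_zsmul, zsmul_eq_mul]
    have hf1 : f 1 = (n:ℝ) * f (1 / n) := by
      have h := AddMonoidHom.map_nsmul f n (1 / (n:ℝ))
      rw [nsmul_eq_mul, nsmul_eq_mul,
        show (n:ℝ) * (1/n) = 1 from by field_simp] at h
      exact h
    have hft : f t = (m:ℝ) * f (1/n) + f δ := by
      have : t = (m:ℝ)/n + δ := by rw [hδ]; ring
      rw [this, map_add, hfm]
    have hrw : f t - t * f 1 = f δ - δ * f 1 := by
      rw [hft, hf1, hδ]; field_simp; ring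
    rw [hrw]
    calc |f δ - δ * f 1| ≤ |f δ| + |δ| * |f 1| := by
          refine (abs_sub _ _).trans ?_
          rw [abs_mul]
      _ ≤ C / n + (1/n) * |f 1| := by
          gcongr
      _ = (C + |f 1|) / n := by ring
  have h0 : |f t - t * f 1| ≤ 0 := by
    refine ge_of_tendsto (tendsto_const_div_atTop_nhds_zero_nat (C + |f 1|)) ?_
    filter_upwards [Filter.eventually_ge_atTop 1] with n hn using key n hn
  have := abs_nonneg (f t - t * f 1)
  have : f t - t * f 1 = 0 := by
    rw [← abs_eq_zero]; linarith
  linarith [this]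


theorem norm_sq_diff (c : ℂ) : ‖1+c‖^2 - ‖c-1‖^2 = 4*c.re := by
  simp only [Complex.sq_norm, Complex.normSq_apply,
    Complex.add_re, Complex.add_im, Complex.sub_re, Complex.sub_im,
    Complex.one_re, Complex.one_im]
  ring

theorem Rr_smul_pair (c : ℂ) (x y : Wfin hh) :
    Rr hh (c • x) y + Rr hh x (c • y) = 2 * c.re * Rr hh x y := by
  have A1 := q_par hh (c • x + y) (x + c • y)
  have A2 := q_par hh (c • x - y) (x - c • y)
  rw [show c • x + y + (x + c • y) = (1+c) • (x + y) from by module,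
    show c • x + y - (x + c • y) = (c-1) • (x - y) from by module,
    q_smul, q_smul] at A1
  rw [show c • x - y + (x - c • y) = (1+c) • (x - y) from by module,
    show c • x - y - (x - c • y) = (c-1) • (x + y) from by module,
    q_smul, q_smul] at A2
  have hn := norm_sq_diff c
  unfold Rr
  linear_combination -(A1 - A2) / 8 + (q hh (x+y) - q hh (x-y)) * hn / 8

theorem Rr_abs_le (x y : Wfin hh) : |Rr hh x y| ≤ (q hh x + q hh y) / 2 := by
  have hp := q_par hh x y
  have h1 := q_nonneg hh (x + y)
  have h2 := q_nonneg hh (x - y)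
  rw [abs_le]; unfold Rr; constructor <;> linarith

theorem Rr_smul_real (t : ℝ) (x y : Wfin hh) :
    Rr hh ((t:ℂ) • x) y = t * Rr hh x y := by
  have f_add : ∀ s u : ℝ, Rr hh (((s+u:ℝ):ℂ) • x) y
      = Rr hh ((s:ℂ) • x) y + Rr hh ((u:ℂ) • x) y := by
    intro s u
    rw [show (((s+u:ℝ):ℂ)) • x = (s:ℂ) • x + (u:ℂ) • x from by push_cast; rw [add_smul],
      Rr_add_left]
  set F : ℝ →+ ℝ := AddMonoidHom.mk' (fun s => Rr hh ((s:ℂ) • x) y)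
    (fun s u => f_add s u) with hF
  have hb : ∀ s : ℝ, |s| ≤ 1 → |F s| ≤ (q hh x + q hh y) / 2 := by
    intro s hs
    have := Rr_abs_le hh ((s:ℂ) • x) y
    rw [q_smul] at this
    have hs2 : ‖(s:ℂ)‖^2 ≤ 1 := by
      rw [Complex.norm_real, Real.norm_eq_abs]
      nlinarith [abs_nonneg s]
    have hq := q_nonneg hh x
    have : |Rr hh ((s:ℂ) • x) y| ≤ (q hh x + q hh y)/2 := by
      refine this.trans ?_
      have : ‖(s:ℂ)‖^2 * q hh x ≤ q hh x := by nlinarith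
      linarith
    exact this
  have := additive_bounded_linear F ((q hh x + q hh y) / 2) hb t
  have h1 : F 1 = Rr hh x y := by
    show Rr hh (((1:ℝ):ℂ) • x) y = _
    norm_num
  rw [h1] at this
  exact this


noncomputable def B (x y : Wfin hh) : ℂ :=
  ⟨Rr hh x y, Rr hh x (Complex.I • y)⟩

theorem B_re (x y : Wfin hh) : (B hh x y).re = Rr hh x y := rfl
theorem B_im (x y : Wfin hh) : (B hh x y).im = Rr hh x (Complex.I • y) := rfl

theorem B_add_left (u v y : Wfin hh) :
    B hh (u + v) y = B hh u y + B hh v y := by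
  apply Complex.ext <;> simp [B, Rr_add_left]

theorem Rr_I_I (x y : Wfin hh) :
    Rr hh (Complex.I • x) (Complex.I • y) = Rr hh x y := by
  unfold Rr
  rw [show Complex.I • x + Complex.I • y = Complex.I • (x + y) from (smul_add _ _ _).symm,
    show Complex.I • x - Complex.I • y = Complex.I • (x - y) from (smul_sub _ _ _).symm,
    q_smul, q_smul]
  simp

theorem Rr_I (x y : Wfin hh) :
    Rr hh (Complex.I • x) y = - Rr hh x (Complex.I • y) := by
  have := Rr_smul_pair hh Complex.I x y
  rw [Complex.I_re] at this
  linarith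

theorem B_smul_real (t : ℝ) (x y : Wfin hh) :
    B hh ((t:ℂ) • x) y = (t:ℂ) * B hh x y := by
  apply Complex.ext
  · rw [B_re, Rr_smul_real, Complex.re_ofReal_mul, B_re]
  · rw [B_im, Rr_smul_real, Complex.im_ofReal_mul, B_im]

theorem B_smul_I (x y : Wfin hh) :
    B hh (Complex.I • x) y = Complex.I * B hh x y := by
  apply Complex.ext
  · rw [Complex.mul_re, Complex.I_re, Complex.I_im]
    simp [B_re, B_im, Rr_I]
  · rw [Complex.mul_im, Complex.I_re, Complex.I_im]
    simp [B_re, B_im, Rr_I_I]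

theorem B_smul_left (c : ℂ) (x y : Wfin hh) :
    B hh (c • x) y = c * B hh x y := by
  have hdecomp : c • x = ((c.re:ℝ):ℂ) • x + ((c.im:ℝ):ℂ) • (Complex.I • x) := by
    rw [smul_smul, ← add_smul]
    congr 1
    exact (Complex.re_add_im c).symm
  rw [hdecomp, B_add_left, B_smul_real, B_smul_real, B_smul_I]
  conv_rhs => rw [← Complex.re_add_im c]
  ring


theorem q_zero : q hh 0 = 0 := by
  simp [q, h_zero hh]

theorem Rr_self (x : Wfin hh) : Rr hh x x = q hh x := by
  unfold Rr
  rw [sub_self, q_zero, show x + x = (2:ℂ) • x from by module, q_smul]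
  norm_num

theorem Rr_x_Ix (x : Wfin hh) : Rr hh x (Complex.I • x) = 0 := by
  have h1 := Rr_I hh x x
  have h2 := Rr_symm hh (Complex.I • x) x
  linarith

theorem B_self (x : Wfin hh) : B hh x x = ((q hh x : ℝ) : ℂ) := by
  apply Complex.ext
  · simp [B_re, Rr_self]
  · simp [B_im, Rr_x_Ix]

theorem q_expand (x y : Wfin hh) (c : ℂ) :
    q hh (c • x + y) = ‖c‖^2 * q hh x + q hh y + 2 * (c * B hh x y).re := by
  rw [q_add, q_smul, ← B_re, B_smul_left]

theorem cauchy_schwarz (x y : Wfin hh) :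
    ‖B hh x y‖^2 ≤ q hh x * q hh y := by
  set β := B hh x y with hβ
  by_cases hβ0 : β = 0
  · rw [hβ0]
    simpa using mul_nonneg (q_nonneg hh x) (q_nonneg hh y)
  have hnβ : ‖β‖ ≠ 0 := norm_ne_zero_iff.mpr hβ0
  have key : ∀ t : ℝ, 0 ≤ q hh x * (t * t) + (-(2 * ‖β‖)) * t + q hh y := by
    intro t
    set c : ℂ := -(t:ℂ) * ((starRingEnd ℂ) β) / (‖β‖ : ℂ) with hc
    have hcnorm : ‖c‖^2 = t^2 := by
      have : ‖c‖ = |t| := by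
        rw [hc, norm_div, norm_mul, norm_neg, Complex.norm_real, RCLike.norm_conj,
          Real.norm_eq_abs, Complex.norm_real, Real.norm_eq_abs, abs_norm]
        have habs : ‖β‖ ≠ 0 := hnβ
        rw [mul_div_assoc, div_self habs, mul_one]
      rw [this, sq_abs]
    have hne : ((‖β‖:ℝ) : ℂ) ≠ 0 := by
      exact_mod_cast hnβ
    have hcβ : c * β = ((-(t * ‖β‖) : ℝ) : ℂ) := by
      have hβre : ((starRingEnd ℂ) β) * β = (((‖β‖:ℝ)^2 : ℝ) : ℂ) := by
        rw [mul_comm, Complex.mul_conj, Complex.normSq_eq_norm_sq]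
      rw [hc, div_mul_eq_mul_div, mul_assoc, hβre, div_eq_iff hne]
      push_cast
      ring
    have := q_nonneg hh (c • x + y)
    rw [q_expand, hcnorm, hcβ] at this
    rw [Complex.ofReal_re] at this
    nlinarith [this]
  have hd := discrim_le_zero key
  rw [discrim] at hd
  nlinarith [hd]


theorem ennreal_div_div_le (a b : ℝ≥0∞) (ha : a ≠ ⊤) : a / (a / b) ≤ b := by
  by_cases ha0 : a = 0
  · simp [ha0]
  by_cases hb : b = ⊤
  · exact hb ▸ le_top
  by_cases hb0 : b = 0
  · rw [hb0, ENNReal.div_zero ha0, ENNReal.div_top]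
  have h1 : a / b ≠ 0 := by simp [ENNReal.div_eq_zero_iff, ha0, hb]
  have h2 : a / b ≠ ⊤ := by simp [ENNReal.div_eq_top, ha, hb0]
  rw [ENNReal.div_le_iff h1 h2, mul_comm, ← ENNReal.div_le_iff hb0 hb]

end SHFAux

/-- **Double duality of singular Hermitian forms.**
Let `V` be a finite-dimensional complex vector space and `h` a singular Hermitian
form on `V`.  Under the canonical identification `V ≅ V^∨∨`, the double dual
singular Hermitian form satisfies `h^∨∨ = h`. -/
theorem singularHermitianForm_double_dual
    {V : Type*} [AddCommGroup V] [Module ℂ V] [FiniteDimensional ℂ V]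
    (h : V → ℝ≥0∞) (hh : IsSingularHermitianForm h) (x : V) :
    hermDual (hermDual h) (Module.evalEquiv ℂ V x) = h x := by
  have heval : ∀ ℓ : Module.Dual ℂ V, (Module.evalEquiv ℂ V x) ℓ = ℓ x := by
    intro ℓ
    rw [Module.evalEquiv_apply, Module.Dual.eval_apply]
  have hle : hermDual (hermDual h) (Module.evalEquiv ℂ V x) ≤ h x := by
    refine iSup_le fun ℓ => ?_
    rw [heval ℓ]
    have h1 : ((‖ℓ x‖₊ : ℝ≥0∞) ^ 2) / h x ≤ hermDual h ℓ :=
      le_iSup (fun y : V => ((‖ℓ y‖₊ : ℝ≥0∞) ^ 2) / h y) x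
    calc ((‖ℓ x‖₊ : ℝ≥0∞) ^ 2) / hermDual h ℓ
        ≤ ((‖ℓ x‖₊ : ℝ≥0∞) ^ 2) / (((‖ℓ x‖₊ : ℝ≥0∞) ^ 2) / h x) :=
          ENNReal.div_le_div_left h1 _
      _ ≤ h x := SHFAux.ennreal_div_div_le _ _
          (by simp [ENNReal.pow_eq_top_iff])
  refine le_antisymm hle ?_
  by_cases hx0 : h x = 0
  · rw [hx0]; exact zero_le
  by_cases hxt : h x = ⊤
  · -- x outside the finiteness locus
    set W : Submodule ℂ V := SHFAux.Wfin hh with hW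
    have hxW : x ∉ W := by
      intro hx
      exact (hx : h x ≠ ⊤) hxt
    have hxq : (Submodule.Quotient.mk x : V ⧸ W) ≠ 0 := by
      rw [Ne, Submodule.Quotient.mk_eq_zero]
      exact hxW
    obtain ⟨g, hg⟩ : ∃ g : Module.Dual ℂ (V ⧸ W),
        g (Submodule.Quotient.mk x) ≠ 0 := by
      by_contra hcon
      push_neg at hcon
      exact hxq ((Module.forall_dual_apply_eq_zero_iff ℂ _).mp hcon)
    set ℓ : Module.Dual ℂ V := g ∘ₗ W.mkQ with hℓ
    have hℓx : ℓ x = g (Submodule.Quotient.mk x) := rfl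
    have hdℓ : hermDual h ℓ = 0 := by
      rw [hermDual, ENNReal.iSup_eq_zero]
      intro y
      by_cases hy : h y = ⊤
      · rw [hy, ENNReal.div_top]
      · have hyW : y ∈ W := hy
        have hy0 : ℓ y = 0 := by
          have : (Submodule.Quotient.mk y : V ⧸ W) = 0 :=
            (Submodule.Quotient.mk_eq_zero W).mpr hyW
          simp [hℓ, Submodule.mkQ_apply, this]
        simp [hy0]
    have hterm : ((‖ℓ x‖₊ : ℝ≥0∞) ^ 2) / hermDual h ℓ = ⊤ := by
      rw [hdℓ]
      refine ENNReal.div_zero ?_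
      simp [hℓx, hg]
    rw [hxt]
    rw [show hermDual (hermDual h) (Module.evalEquiv ℂ V x)
        = ⨆ ℓ' : Module.Dual ℂ V, ((‖ℓ' x‖₊ : ℝ≥0∞) ^ 2) / hermDual h ℓ' from by
      rw [hermDual]
      exact iSup_congr fun ℓ' => by rw [heval ℓ']]
    exact le_iSup_of_le ℓ (le_of_eq hterm.symm)
  · -- main case : 0 < h x < ∞
    set W : Submodule ℂ V := SHFAux.Wfin hh with hW
    have hxW : x ∈ W := hxt
    set x₀ : W := ⟨x, hxW⟩ with hx₀
    obtain ⟨U, hU⟩ := Submodule.exists_isCompl W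
    set π : V →ₗ[ℂ] W := W.linearProjOfIsCompl U hU with hπ
    set Bx : W →ₗ[ℂ] ℂ :=
      { toFun := fun w => SHFAux.B hh w x₀
        map_add' := fun u v => SHFAux.B_add_left hh u v x₀
        map_smul' := fun c w => SHFAux.B_smul_left hh c w x₀ } with hBx
    set ℓ : Module.Dual ℂ V := Bx ∘ₗ π with hℓ
    have hℓmem : ∀ y : V, (hy : y ∈ W) → ℓ y = SHFAux.B hh ⟨y, hy⟩ x₀ := by
      intro y hy
      have : π y = ⟨y, hy⟩ := Submodule.linearProjOfIsCompl_apply_left hU ⟨y, hy⟩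
      simp [hℓ, hBx, this]
    have hℓx : ℓ x = (((h x).toReal : ℝ) : ℂ) := by
      rw [hℓmem x hxW]
      exact SHFAux.B_self hh x₀
    have hnum : ((‖ℓ x‖₊ : ℝ≥0∞) ^ 2) = h x * h x := by
      rw [hℓx]
      rw [show ‖(((h x).toReal : ℝ) : ℂ)‖₊ = ‖(h x).toReal‖₊ from Complex.nnnorm_real _]
      rw [← enorm_eq_nnnorm, Real.enorm_eq_ofReal ENNReal.toReal_nonneg, ENNReal.ofReal_toReal hxt]
      rw [sq]
    have hbound : ∀ y : V, ((‖ℓ y‖₊ : ℝ≥0∞) ^ 2) / h y ≤ h x := by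
      intro y
      by_cases hy : h y = ⊤
      · rw [hy, ENNReal.div_top]; exact zero_le
      · have hyW : y ∈ W := hy
        have hcs := SHFAux.cauchy_schwarz hh ⟨y, hyW⟩ x₀
        have hq1 : SHFAux.q hh (⟨y, hyW⟩ : W) = (h y).toReal := rfl
        have hq2 : SHFAux.q hh x₀ = (h x).toReal := rfl
        rw [hq1, hq2, ← hℓmem y hyW] at hcs
        refine ENNReal.div_le_of_le_mul ?_
        have e1 : ((‖ℓ y‖₊ : ℝ≥0∞) ^ 2) = ENNReal.ofReal (‖ℓ y‖ ^ 2) := by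
          rw [ENNReal.ofReal_pow (norm_nonneg _)]
          congr 1
          rw [← Real.enorm_eq_ofReal (norm_nonneg _), enorm_eq_nnnorm, nnnorm_norm]
        rw [e1]
        calc ENNReal.ofReal (‖ℓ y‖ ^ 2)
            ≤ ENNReal.ofReal ((h y).toReal * (h x).toReal) := ENNReal.ofReal_le_ofReal hcs
          _ = ENNReal.ofReal (h y).toReal * ENNReal.ofReal (h x).toReal :=
              ENNReal.ofReal_mul ENNReal.toReal_nonneg
          _ = h y * h x := by rw [ENNReal.ofReal_toReal hy, ENNReal.ofReal_toReal hxt]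
          _ = h x * h y := mul_comm _ _
    have hdℓ : hermDual h ℓ = h x := by
      refine le_antisymm (iSup_le hbound) ?_
      have := le_iSup (fun y : V => ((‖ℓ y‖₊ : ℝ≥0∞) ^ 2) / h y) x
      refine le_trans (le_of_eq ?_) this
      rw [hnum, mul_div_assoc, ENNReal.div_self hx0 hxt, mul_one]
    have hterm : ((‖ℓ x‖₊ : ℝ≥0∞) ^ 2) / hermDual h ℓ = h x := by
      rw [hdℓ, hnum, mul_div_assoc, ENNReal.div_self hx0 hxt, mul_one]
    rw [show hermDual (hermDual h) (Module.evalEquiv ℂ V x)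
        = ⨆ ℓ' : Module.Dual ℂ V, ((‖ℓ' x‖₊ : ℝ≥0∞) ^ 2) / hermDual h ℓ' from by
      rw [hermDual]
      exact iSup_congr fun ℓ' => by rw [heval ℓ']]
    exact le_iSup_of_le ℓ (le_of_eq hterm.symm)
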